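/- The second derivative at 0 of the F-distribution-based weight function H_{d_1,d_2} equals (2-d_1)(d_2+2)/(2(d_1+d_2)), which is negative for d_1 > 2 and d_2 > 0. -/

import Mathlib

/-!
Near `τ = 0`, `H(τ) = φ(1 + τ) / φ(1)` for `φ(x) = x ^ p * (1 + c x) ^ (-q)` with `p = d₁/2 - 1`,
`q = (d₁ + d₂)/2`, `c = (d₁ - 2)/(d₂ + 2)`; the power of `a` cancels. Writing `φ' = φ s` with the
score `s(x) = p/x - q c/(1 + c x)` gives `φ'' = φ (s² + s')`. The scale `a` is chosen so that `1`
is the mode, `s(1) = 0`, hence `H''(0) = s'(1) = -p + q c²/(1 + c)²`, which simplifies to the claim.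
-/

open Real Set

/-- The F-type kernel (up to a positive constant) with `a = d₁(d₂+2)/((d₁-2)d₂)`,
extended by `0` outside `(0,∞)`. -/
noncomputable def fKernel (d₁ d₂ x : ℝ) : ℝ :=
  if 0 < x then
    (x / (d₁ * (d₂ + 2) / ((d₁ - 2) * d₂))) ^ (d₁ / 2 - 1) *
      (1 + d₁ * x / (d₂ * (d₁ * (d₂ + 2) / ((d₁ - 2) * d₂)))) ^ (-((d₁ + d₂) / 2))
  else 0

/-- Weight function 4: the F-distribution-based weight. -/
noncomputable def Hf (d₁ d₂ τ : ℝ) : ℝ := fKernel d₁ d₂ (τ + 1) / fKernel d₁ d₂ 1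

open Filter Topology

lemma deriv_deriv_comp_add_const_div_const (f : ℝ → ℝ) (a b x : ℝ) :
    deriv (deriv fun τ => f (τ + a) / b) x = deriv (deriv f) (x + a) / b := by
  have h : ∀ g : ℝ → ℝ, deriv (fun τ => g (τ + a) / b) = fun τ => deriv g (τ + a) / b := by
    intro g; ext τ; rw [deriv_div_const, deriv_comp_add_const]
  rw [h, h]

noncomputable def betaPrimeKernel (p q c x : ℝ) : ℝ := x ^ p * (1 + c * x) ^ (-q)

namespace betaPrimeKernel

variable {p q c x : ℝ}

lemma pos (hc : 0 ≤ c) (hx : 0 < x) : 0 < betaPrimeKernel p q c x := by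
  have : 0 < 1 + c * x := by positivity
  unfold betaPrimeKernel
  positivity

lemma hasDerivAt (hc : 0 ≤ c) (hx : 0 < x) :
    HasDerivAt (betaPrimeKernel p q c)
      (betaPrimeKernel p q c x * (p / x - q * c / (1 + c * x))) x := by
  have hcx : 0 < 1 + c * x := by positivity
  have hpow : HasDerivAt (fun y => y ^ p) (1 * p * x ^ (p - 1)) x :=
    (hasDerivAt_id x).rpow_const (Or.inl hx.ne')
  have hinner : HasDerivAt (fun y => 1 + c * y) c x := by
    simpa using ((hasDerivAt_id x).const_mul c).const_add 1
  refine (hpow.mul (hinner.rpow_const (p := -q) (Or.inl hcx.ne'))).congr_deriv ?_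
  rw [betaPrimeKernel, rpow_sub_one hx.ne', rpow_sub_one hcx.ne']
  field_simp
  ring

lemma deriv_eventuallyEq (hc : 0 ≤ c) (hx : 0 < x) :
    deriv (betaPrimeKernel p q c) =ᶠ[𝓝 x]
      fun y => betaPrimeKernel p q c y * (p / y - q * c / (1 + c * y)) := by
  filter_upwards [Ioi_mem_nhds hx] with y hy
  exact (hasDerivAt hc hy).deriv

lemma hasDerivAt_deriv (hc : 0 ≤ c) (hx : 0 < x) :
    HasDerivAt (deriv (betaPrimeKernel p q c))
      (betaPrimeKernel p q c x *
        ((p / x - q * c / (1 + c * x)) ^ 2 - p / x ^ 2 + q * c ^ 2 / (1 + c * x) ^ 2)) x := by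
  have hcx : 0 < 1 + c * x := by positivity
  have hinner : HasDerivAt (fun y => 1 + c * y) c x := by
    simpa using ((hasDerivAt_id x).const_mul c).const_add 1
  have hscore : HasDerivAt (fun y => p / y - q * c / (1 + c * y))
      (-p / x ^ 2 + q * c ^ 2 / (1 + c * x) ^ 2) x := by
    have h₁ : HasDerivAt (fun y => p / y) (-p / x ^ 2) x := by
      simpa using (hasDerivAt_const x p).fun_div (hasDerivAt_id x) hx.ne'
    have h₂ : HasDerivAt (fun y => q * c / (1 + c * y)) (-(q * c * c) / (1 + c * x) ^ 2) x := by
      simpa using (hasDerivAt_const x (q * c)).fun_div hinner hcx.ne'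
    exact (h₁.sub h₂).congr_deriv (by ring)
  refine (((hasDerivAt hc hx).mul hscore).congr_of_eventuallyEq
    (deriv_eventuallyEq hc hx)).congr_deriv ?_
  ring

end betaPrimeKernel

section FWeight

variable {d₁ d₂ : ℝ}

lemma fKernel_scale_pos (hd₁ : 2 < d₁) (hd₂ : 0 < d₂) : 0 < d₁ * (d₂ + 2) / ((d₁ - 2) * d₂) := by
  have : 0 < d₁ - 2 := by linarith
  positivity

lemma fKernel_eq_betaPrimeKernel (hd₁ : 2 < d₁) (hd₂ : 0 < d₂) {x : ℝ} (hx : 0 < x) :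
    fKernel d₁ d₂ x = betaPrimeKernel (d₁ / 2 - 1) ((d₁ + d₂) / 2) ((d₁ - 2) / (d₂ + 2)) x /
      (d₁ * (d₂ + 2) / ((d₁ - 2) * d₂)) ^ (d₁ / 2 - 1) := by
  have ha := fKernel_scale_pos hd₁ hd₂
  have hscale : d₁ * x / (d₂ * (d₁ * (d₂ + 2) / ((d₁ - 2) * d₂))) = (d₁ - 2) / (d₂ + 2) * x := by
    field_simp
  rw [fKernel, if_pos hx, hscale, div_rpow hx.le ha.le, betaPrimeKernel, div_mul_eq_mul_div]

lemma Hf_eventuallyEq (hd₁ : 2 < d₁) (hd₂ : 0 < d₂) :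
    Hf d₁ d₂ =ᶠ[𝓝 0] fun τ =>
      betaPrimeKernel (d₁ / 2 - 1) ((d₁ + d₂) / 2) ((d₁ - 2) / (d₂ + 2)) (τ + 1) /
        betaPrimeKernel (d₁ / 2 - 1) ((d₁ + d₂) / 2) ((d₁ - 2) / (d₂ + 2)) 1 := by
  filter_upwards [Ioi_mem_nhds (show (-1 : ℝ) < 0 by norm_num)] with τ hτ
  have hτ' : 0 < τ + 1 := by linarith [mem_Ioi.mp hτ]
  rw [Hf, fKernel_eq_betaPrimeKernel hd₁ hd₂ hτ', fKernel_eq_betaPrimeKernel hd₁ hd₂ one_pos,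
    div_div_div_cancel_right₀ (rpow_pos_of_pos (fKernel_scale_pos hd₁ hd₂) _).ne']

end FWeight

/-- The second derivative at `0` of the F-distribution-based weight function equals
`(2-d₁)(d₂+2)/(2(d₁+d₂))`, which is negative for `d₁ > 2`, `d₂ > 0`. -/
theorem f_weight_second_deriv (d₁ d₂ : ℝ) (hd₁ : 2 < d₁) (hd₂ : 0 < d₂) :
    deriv (deriv (Hf d₁ d₂)) 0 = (2 - d₁) * (d₂ + 2) / (2 * (d₁ + d₂)) ∧
      (2 - d₁) * (d₂ + 2) / (2 * (d₁ + d₂)) < 0 := by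
  have hc : 0 ≤ (d₁ - 2) / (d₂ + 2) := div_nonneg (by linarith) (by linarith)
  refine ⟨?_, div_neg_of_neg_of_pos (mul_neg_of_neg_of_pos (by linarith) (by linarith))
    (by linarith)⟩
  rw [(Hf_eventuallyEq hd₁ hd₂).deriv.deriv_eq, deriv_deriv_comp_add_const_div_const, zero_add,
    (betaPrimeKernel.hasDerivAt_deriv hc one_pos).deriv,
    mul_div_cancel_left₀ _ (betaPrimeKernel.pos hc one_pos).ne']
  have hd : d₂ + 2 ≠ 0 := by linarith
  have hsum : 1 + (d₁ - 2) / (d₂ + 2) * 1 = (d₁ + d₂) / (d₂ + 2) := by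
    field_simp; ring
  -- `x = 1` is the mode of the kernel: this is what the choice of `a` achieves.
  have hmode : (d₁ / 2 - 1) / 1 - (d₁ + d₂) / 2 * ((d₁ - 2) / (d₂ + 2)) /
      (1 + (d₁ - 2) / (d₂ + 2) * 1) = 0 := by
    rw [hsum]; field_simp; ring
  have hd' : d₁ + d₂ ≠ 0 := by linarith
  rw [hmode, hsum]
  field_simp
  ring
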